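/- arXiv:0910.4717 — 8 statements merged into one kernel-verified Lean document; each statement's English description precedes it below -/
import Mathlib

section
/- If (Y, d₁) is a complete metric space, then the space Z = Y ⊕ (Y × ℝ) equipped with the metric d of the Z-construction (with constants 0 < M ≤ 2R) is a complete metric space. -/
/-- The distance of the Z-construction on the disjoint union `Y ⊕ (Y × ℝ)`. -/
noncomputable def zdist {Y : Type*} [MetricSpace Y] (R M : ℝ) :
    Y ⊕ Y × ℝ → Y ⊕ Y × ℝ → ℝ
  | Sum.inl y₁, Sum.inl y₂ => dist y₁ y₂
  | Sum.inl y₁, Sum.inr q => dist y₁ q.1 + R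
  | Sum.inr p, Sum.inl y₂ => dist p.1 y₂ + R
  | Sum.inr p, Sum.inr q => dist p.1 q.1 + min |p.2 - q.2| M

/-- if `(Y, d₁)` is a complete metric space then `Z = Y ⊕ (Y × ℝ)`
equipped with the metric `d = zdist R M` of the Z-construction (`0 < M ≤ 2R`)
is a complete metric space. -/
theorem zspace_completeSpace {Y : Type*} [MetricSpace Y] [CompleteSpace Y]
    (R M : ℝ) (hM : 0 < M) (hRM : M ≤ 2 * R)
    (mZ : MetricSpace (Y ⊕ Y × ℝ))
    (hd : ∀ a b : Y ⊕ Y × ℝ, @dist _ mZ.toDist a b = zdist R M a b) :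
    @CompleteSpace _ mZ.toUniformSpace := by
  letI := mZ
  have hR : 0 < R := by linarith
  apply Metric.complete_of_cauchySeq_tendsto
  intro u hu
  set ε : ℝ := min R M with hε
  have hε0 : 0 < ε := lt_min hR hM
  obtain ⟨N, hN⟩ := Metric.cauchySeq_iff.1 hu ε hε0
  set v : ℕ → Y := fun n => Sum.elim id Prod.fst (u n) with hv
  set τ : ℕ → ℝ := fun n => Sum.elim (fun _ => 0) Prod.snd (u n) with hτ
  rcases h0 : u N with y0 | p0
  · -- all terms eventually in the left component
    have key : ∀ n, N ≤ n → u n = Sum.inl (v n) := by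
      intro n hn
      rcases h : u n with y | p
      · simp [hv, h]
      · exfalso
        have h1 := hN N le_rfl n hn
        rw [hd, h0, h] at h1
        simp only [zdist] at h1
        have h2 : ε ≤ R := min_le_left _ _
        have h3 : (0:ℝ) ≤ dist y0 p.1 := dist_nonneg
        linarith
    have hvC : CauchySeq (fun n => v (n + N)) := by
      rw [Metric.cauchySeq_iff]
      intro δ hδ
      obtain ⟨N', hN'⟩ := Metric.cauchySeq_iff.1 hu δ hδ
      refine ⟨N', fun m hm n hn => ?_⟩
      have h1 := hN' (m + N) (le_trans hm (Nat.le_add_right _ _))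
        (n + N) (le_trans hn (Nat.le_add_right _ _))
      rw [hd, key (m + N) (Nat.le_add_left N m), key (n + N) (Nat.le_add_left N n)] at h1
      simpa [zdist] using h1
    obtain ⟨y, hy⟩ := cauchySeq_tendsto_of_complete hvC
    refine ⟨Sum.inl y, ?_⟩
    rw [← Filter.tendsto_add_atTop_iff_nat N, tendsto_iff_dist_tendsto_zero]
    have hy' := tendsto_iff_dist_tendsto_zero.1 hy
    refine hy'.congr fun n => ?_
    rw [hd, key (n + N) (Nat.le_add_left N n)]
    simp [zdist]
  · -- all terms eventually in the right component
    have key : ∀ n, N ≤ n → u n = Sum.inr (v n, τ n) := by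
      intro n hn
      rcases h : u n with y | p
      · exfalso
        have h1 := hN N le_rfl n hn
        rw [hd, h0, h] at h1
        simp only [zdist] at h1
        have h2 : ε ≤ R := min_le_left _ _
        have h3 : (0:ℝ) ≤ dist p0.1 y := dist_nonneg
        linarith
      · simp [hv, hτ, h]
    have hbound : ∀ δ : ℝ, 0 < δ → ∃ N', ∀ m ≥ N', ∀ n ≥ N',
        dist (v (m + N)) (v (n + N)) < δ ∧ |τ (m + N) - τ (n + N)| < δ := by
      intro δ hδ
      obtain ⟨N', hN'⟩ := Metric.cauchySeq_iff.1 hu (min δ M) (lt_min hδ hM)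
      refine ⟨N', fun m hm n hn => ?_⟩
      have h1 := hN' (m + N) (le_trans hm (Nat.le_add_right _ _))
        (n + N) (le_trans hn (Nat.le_add_right _ _))
      rw [hd, key (m + N) (Nat.le_add_left N m), key (n + N) (Nat.le_add_left N n)] at h1
      simp only [zdist] at h1
      have hd0 : (0:ℝ) ≤ dist (v (m + N)) (v (n + N)) := dist_nonneg
      have hmin : min |τ (m + N) - τ (n + N)| M = |τ (m + N) - τ (n + N)| := by
        rcases le_or_gt |τ (m + N) - τ (n + N)| M with h | h
        · exact min_eq_left h
        · exfalso
          rw [min_eq_right h.le] at h1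
          have := min_le_right δ M
          linarith
      rw [hmin] at h1
      have hmd : min δ M ≤ δ := min_le_left _ _
      have habs : (0:ℝ) ≤ |τ (m + N) - τ (n + N)| := abs_nonneg _
      constructor <;> linarith
    have hvC : CauchySeq (fun n => v (n + N)) := by
      rw [Metric.cauchySeq_iff]
      intro δ hδ
      obtain ⟨N', hN'⟩ := hbound δ hδ
      exact ⟨N', fun m hm n hn => (hN' m hm n hn).1⟩
    have hτC : CauchySeq (fun n => τ (n + N)) := by
      rw [Metric.cauchySeq_iff]
      intro δ hδ
      obtain ⟨N', hN'⟩ := hbound δ hδ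
      refine ⟨N', fun m hm n hn => ?_⟩
      rw [Real.dist_eq]
      exact (hN' m hm n hn).2
    obtain ⟨y, hy⟩ := cauchySeq_tendsto_of_complete hvC
    obtain ⟨t, ht⟩ := cauchySeq_tendsto_of_complete hτC
    refine ⟨Sum.inr (y, t), ?_⟩
    rw [← Filter.tendsto_add_atTop_iff_nat N, tendsto_iff_dist_tendsto_zero]
    have hy' := tendsto_iff_dist_tendsto_zero.1 hy
    have ht' := tendsto_iff_dist_tendsto_zero.1 ht
    have hsum : Filter.Tendsto
        (fun n => dist (v (n + N)) y + dist (τ (n + N)) t) Filter.atTop (nhds 0) := by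
      simpa using hy'.add ht'
    refine squeeze_zero (fun n => dist_nonneg) (fun n => ?_) hsum
    rw [hd, key (n + N) (Nat.le_add_left N n)]
    simp only [zdist]
    have : min |τ (n + N) - t| M ≤ |τ (n + N) - t| := min_le_left _ _
    rw [Real.dist_eq]
    gcongr
end

section
/- Let Z be the metric space of the Z-construction. Let g_Y : Y → Y be a surjective isometry of (Y, d₁) and let g_ℝ : ℝ → ℝ be a surjective isometry of the Euclidean line. Then the map g : Z → Z defined by g(y) = g_Y(y) for y ∈ Y and g(y, r) = (g_Y(y), g_ℝ(r)) for (y, r) ∈ Y × ℝ is a surjective isometry of (Z, d). -/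
/-- if `g_Y` is a surjective isometry of `(Y, d₁)` and `g_ℝ` is a
surjective isometry of the Euclidean line `ℝ`, then the map `g : Z → Z` defined by
`g(y) = g_Y(y)` for `y ∈ Y` and `g(y, r) = (g_Y(y), g_ℝ(r))` for `(y, r) ∈ Y × ℝ`
is a surjective isometry of `(Z, d)`. -/
theorem zspace_product_isometry {Y : Type*} [MetricSpace Y]
    (R M : ℝ) (hM : 0 < M) (hRM : M ≤ 2 * R)
    (gY : Y → Y) (hgYsurj : Function.Surjective gY)
    (hgYiso : ∀ a b : Y, dist (gY a) (gY b) = dist a b)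
    (gR : ℝ → ℝ) (hgRsurj : Function.Surjective gR)
    (hgRiso : ∀ a b : ℝ, dist (gR a) (gR b) = dist a b) :
    Function.Surjective
        (Sum.map gY (fun p : Y × ℝ => (gY p.1, gR p.2)) : Y ⊕ Y × ℝ → Y ⊕ Y × ℝ) ∧
    ∀ a b : Y ⊕ Y × ℝ,
      zdist R M (Sum.map gY (fun p : Y × ℝ => (gY p.1, gR p.2)) a)
          (Sum.map gY (fun p : Y × ℝ => (gY p.1, gR p.2)) b) =
        zdist R M a b := by
  have habs : ∀ a b : ℝ, |gR a - gR b| = |a - b| := by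
    intro a b
    have := hgRiso a b
    simpa [Real.dist_eq] using this
  constructor
  · rintro (y | ⟨y, r⟩)
    · obtain ⟨x, hx⟩ := hgYsurj y
      exact ⟨Sum.inl x, by simp [hx]⟩
    · obtain ⟨x, hx⟩ := hgYsurj y
      obtain ⟨t, ht⟩ := hgRsurj r
      exact ⟨Sum.inr (x, t), by simp [hx, ht]⟩
  · rintro (a | ⟨a, s⟩) (b | ⟨b, t⟩) <;> simp [zdist, hgYiso, habs]
end

section
/- Let Z be the metric space of the Z-construction and suppose in addition that Y is compact. Then every surjective isometry g of (Z, d) maps Y onto Y and Y × ℝ onto Y × ℝ, and there exist a surjective isometry g_Y of (Y, d₁) and a surjective isometry g_ℝ of the Euclidean line ℝ such that g(y) = g_Y(y) for all y ∈ Y and g(y, r) = (g_Y(y), g_ℝ(r)) for all (y, r) ∈ Y × ℝ. -/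
/-!
An isometry cannot move a point across the gap of width `R` between `Y` and `Y × ℝ` while
moving it by less than `min R M`, so by connectedness each line `{y} × ℝ` is mapped into a single
side. It cannot be mapped into the compact `Y`, since its points `(y, n M)` are pairwise at
distance `M`; applied to the inverse map this also keeps `Y` on its side. Distances to `Y` then
force `g (y, r) = (g_Y y, g_ℝ r)` with `g_ℝ` preserving `min |a - b| M`. Such a map of `ℝ` is
continuous and injective, hence monotone or antitone, and a monotone local isometry of `ℝ` is a
translation (an antitone one, a reflection).
-/

lemma min_abs_eq_zero_iff {x M : ℝ} (hM : 0 < M) : min |x| M = 0 ↔ x = 0 := by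
  rw [min_eq_iff]
  constructor
  · rintro (⟨hx, -⟩ | ⟨rfl, -⟩)
    · exact abs_eq_zero.1 hx
    · exact absurd rfl hM.ne'
  · rintro rfl
    simp [hM.le]

lemma apply_eq_of_forall_dist_lt_imp_eq {X α : Type*} [PseudoMetricSpace X] [PreconnectedSpace X]
    {f : X → α} {δ : ℝ} (hδ : 0 < δ) (hf : ∀ x y, dist x y < δ → f x = f y) (x y : X) :
    f x = f y := by
  refine IsLocallyConstant.apply_eq_of_preconnectedSpace ?_ x y
  refine (IsLocallyConstant.iff_eventually_eq f).2 fun x => ?_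
  filter_upwards [Metric.ball_mem_nhds x hδ] with y hy
  exact hf y x hy

lemma CompactSpace.exists_lt_dist_lt {X : Type*} [PseudoMetricSpace X] [CompactSpace X]
    (u : ℕ → X) {ε : ℝ} (hε : 0 < ε) : ∃ m n, m < n ∧ dist (u m) (u n) < ε := by
  obtain ⟨_, φ, hφ, hconv⟩ := CompactSpace.tendsto_subseq u
  obtain ⟨N, hN⟩ := Metric.cauchySeq_iff.1 (Filter.Tendsto.cauchySeq hconv) ε hε
  exact ⟨φ N, φ (N + 1), hφ N.lt_succ_self, hN N le_rfl (N + 1) N.le_succ⟩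

lemma Sum.image_map_range_inl {α β γ δ : Type*} {f : α → γ} (hf : Function.Surjective f)
    (g : β → δ) : Sum.map f g '' Set.range Sum.inl = Set.range Sum.inl := by
  rw [← Set.range_comp]
  exact hf.range_comp Sum.inl

lemma Sum.image_map_range_inr {α β γ δ : Type*} (f : α → γ) {g : β → δ}
    (hg : Function.Surjective g) : Sum.map f g '' Set.range Sum.inr = Set.range Sum.inr := by
  rw [← Set.range_comp]
  exact hg.range_comp Sum.inr

namespace Real

lemma sub_eq_sub_of_monotone_of_abs_sub_eq {f : ℝ → ℝ} (hf : Monotone f) {δ : ℝ} (hδ : 0 < δ)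
    (hloc : ∀ a b, |a - b| < δ → |f a - f b| = |a - b|) (a b : ℝ) : f a - a = f b - b := by
  refine apply_eq_of_forall_dist_lt_imp_eq (f := fun x => f x - x) hδ (fun x y hxy => ?_) a b
  have h := hloc x y hxy
  rcases le_total x y with hle | hle
  · rw [abs_of_nonpos (sub_nonpos.2 (hf hle)), abs_of_nonpos (sub_nonpos.2 hle)] at h
    linarith
  · rw [abs_of_nonneg (sub_nonneg.2 (hf hle)), abs_of_nonneg (sub_nonneg.2 hle)] at h
    linarith

lemma exists_eq_add_or_eq_neg_add_of_min_abs_sub_eq {M : ℝ} (hM : 0 < M) {f : ℝ → ℝ}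
    (hf : ∀ a b, min |f a - f b| M = min |a - b| M) :
    (∃ c, ∀ x, f x = x + c) ∨ ∃ c, ∀ x, f x = -x + c := by
  have hloc : ∀ a b, |a - b| < M → |f a - f b| = |a - b| := by
    intro a b hab
    have h := hf a b
    rw [min_eq_left hab.le] at h
    rw [← h, min_eq_left]
    by_contra! hlt
    rw [min_eq_right hlt.le] at h
    exact hab.ne' h
  have hinj : Function.Injective f := fun a b hab => by
    have h := hf a b
    rwa [hab, sub_self, min_abs_eq_zero_iff hM |>.2 rfl, eq_comm, min_abs_eq_zero_iff hM,
      sub_eq_zero] at h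
  have hcont : Continuous f := Metric.continuous_iff.2 fun b ε hε =>
    ⟨min ε M, lt_min hε hM, fun a ha => by
      rw [Real.dist_eq] at ha ⊢
      rw [hloc a b (ha.trans_le (min_le_right _ _))]
      exact ha.trans_le (min_le_left _ _)⟩
  rcases hcont.strictMono_of_inj hinj with hmono | hanti
  · refine Or.inl ⟨f 0 - 0, fun x => ?_⟩
    linarith [sub_eq_sub_of_monotone_of_abs_sub_eq hmono.monotone hM hloc x 0]
  · refine Or.inr ⟨f 0 + 0, fun x => ?_⟩
    have hloc' : ∀ a b, |a - b| < M → |-f a - -f b| = |a - b| := fun a b hab => by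
      rw [neg_sub_neg, abs_sub_comm, hloc a b hab]
    linarith [sub_eq_sub_of_monotone_of_abs_sub_eq hanti.antitone.neg hM hloc' x 0]

lemma surjective_and_dist_eq_of_min_abs_sub_eq {M : ℝ} (hM : 0 < M) {f : ℝ → ℝ}
    (hf : ∀ a b, min |f a - f b| M = min |a - b| M) :
    Function.Surjective f ∧ ∀ a b, dist (f a) (f b) = dist a b := by
  simp only [Real.dist_eq]
  rcases exists_eq_add_or_eq_neg_add_of_min_abs_sub_eq hM hf with ⟨c, hc⟩ | ⟨c, hc⟩
  · refine ⟨fun y => ⟨y - c, by rw [hc]; ring⟩, fun a b => by rw [hc, hc]; ring_nf⟩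
  · refine ⟨fun y => ⟨c - y, by rw [hc]; ring⟩, fun a b => ?_⟩
    rw [hc, hc, show -a + c - (-b + c) = -(a - b) by ring, abs_neg]

end Real

section ZDist

variable {Y : Type*} [MetricSpace Y] {R M : ℝ}

lemma zdist_self (hM : 0 ≤ M) (z : Y ⊕ Y × ℝ) : zdist R M z z = 0 := by
  rcases z with y | p <;> simp [zdist, hM]

lemma eq_of_zdist_eq_zero (hR : 0 < R) (hM : 0 < M) {a b : Y ⊕ Y × ℝ}
    (h : zdist R M a b = 0) : a = b := by
  rcases a with y | ⟨y, s⟩ <;> rcases b with y' | ⟨y', t⟩ <;> simp only [zdist] at h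
  · rw [dist_eq_zero.1 h]
  · linarith [dist_nonneg (x := y) (y := y')]
  · linarith [dist_nonneg (x := y) (y := y')]
  · have hmin : 0 ≤ min |s - t| M := le_min (abs_nonneg _) hM.le
    have hy : dist y y' = 0 := by linarith [dist_nonneg (x := y) (y := y')]
    rw [hy, zero_add, min_abs_eq_zero_iff hM, sub_eq_zero] at h
    rw [dist_eq_zero.1 hy, h]

lemma isLeft_eq_of_zdist_lt {a b : Y ⊕ Y × ℝ} (h : zdist R M a b < R) : a.isLeft = b.isLeft := by
  rcases a with y | p <;> rcases b with y' | q <;> simp only [zdist] at h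
  · rfl
  · linarith [dist_nonneg (x := y) (y := q.1)]
  · linarith [dist_nonneg (x := p.1) (y := y')]
  · rfl

variable {g : Y ⊕ Y × ℝ → Y ⊕ Y × ℝ}

lemma injective_of_zdist_eq (hR : 0 < R) (hM : 0 < M)
    (hg : ∀ a b, zdist R M (g a) (g b) = zdist R M a b) : Function.Injective g := fun a b hab =>
  eq_of_zdist_eq_zero hR hM (by rw [← hg, hab, zdist_self hM.le])

lemma isLeft_map_inr_eq (hR : 0 < R) (hM : 0 < M)
    (hg : ∀ a b, zdist R M (g a) (g b) = zdist R M a b) (y : Y) (s t : ℝ) :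
    (g (.inr (y, s))).isLeft = (g (.inr (y, t))).isLeft := by
  refine apply_eq_of_forall_dist_lt_imp_eq (f := fun s => (g (.inr (y, s))).isLeft)
    (lt_min hR hM) (fun s t hst => isLeft_eq_of_zdist_lt (R := R) (M := M) ?_) s t
  rw [Real.dist_eq] at hst
  rw [hg]
  simpa [zdist] using (min_le_left _ _).trans_lt (hst.trans_le (min_le_left _ _))

lemma exists_map_inr_eq_inr [CompactSpace Y] (hR : 0 < R) (hM : 0 < M)
    (hg : ∀ a b, zdist R M (g a) (g b) = zdist R M a b) (p : Y × ℝ) :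
    ∃ q, g (.inr p) = .inr q := by
  obtain ⟨y, t⟩ := p
  rcases ht : g (.inr (y, t)) with u₀ | q
  swap
  · exact ⟨q, rfl⟩
  have hu (n : ℕ) : ∃ u, g (.inr (y, n * M)) = .inl u := by
    rw [← Sum.isLeft_iff, isLeft_map_inr_eq hR hM hg y _ t, ht]
    rfl
  choose u hu using hu
  obtain ⟨m, n, hmn, hdist⟩ := CompactSpace.exists_lt_dist_lt u hM
  have hsep : M ≤ |m * M - n * M| := by
    have : (m : ℝ) + 1 ≤ n := by exact_mod_cast hmn
    rw [abs_sub_comm, abs_of_nonneg (by nlinarith)]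
    nlinarith
  have h := hg (.inr (y, m * M)) (.inr (y, n * M))
  simp only [hu, zdist, dist_self, zero_add, min_eq_right hsep] at h
  exact absurd h hdist.ne

lemma exists_map_inl_eq_inl [CompactSpace Y] (hR : 0 < R) (hM : 0 < M)
    (hg : ∀ a b, zdist R M (g a) (g b) = zdist R M a b) (hsurj : Function.Surjective g)
    (y : Y) : ∃ y', g (.inl y) = .inl y' := by
  obtain ⟨g', hg'⟩ := hsurj.hasRightInverse
  have hg'_dist (a b) : zdist R M (g' a) (g' b) = zdist R M a b := by
    rw [← hg, hg' a, hg' b]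
  cases hy : g (.inl y) with
  | inl y' => exact ⟨y', rfl⟩
  | inr q =>
    obtain ⟨p, hp⟩ := exists_map_inr_eq_inr hR hM hg'_dist q
    have : Sum.inl y = Sum.inr p := injective_of_zdist_eq hR hM hg (by rw [hy, ← hp, hg'])
    exact absurd this Sum.inl_ne_inr

lemma dist_eq_of_map_inl (hg : ∀ a b, zdist R M (g a) (g b) = zdist R M a b) {gY : Y → Y}
    (hgY : ∀ y, g (.inl y) = .inl (gY y)) (a b : Y) : dist (gY a) (gY b) = dist a b := by
  simpa [hgY, zdist] using hg (.inl a) (.inl b)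

lemma exists_map_inr_eq_prodMap (hM : 0 < M)
    (hg : ∀ a b, zdist R M (g a) (g b) = zdist R M a b) {gY : Y → Y}
    (hgY : ∀ y, g (.inl y) = .inl (gY y)) (hinr : ∀ p, ∃ q, g (.inr p) = .inr q) :
    ∃ gR : ℝ → ℝ, (∀ a b, min |gR a - gR b| M = min |a - b| M) ∧
      ∀ y r, g (.inr (y, r)) = .inr (gY y, gR r) := by
  rcases isEmpty_or_nonempty Y with hY | ⟨⟨y₀⟩⟩
  · exact ⟨id, fun _ _ => rfl, fun y => isEmptyElim y⟩
  choose ψ hψ using hinr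
  have hfst (y : Y) (r : ℝ) : (ψ (y, r)).1 = gY y := by
    have h := hg (.inl y) (.inr (y, r))
    simp only [hgY, hψ, zdist, dist_self, zero_add, add_eq_right, dist_eq_zero] at h
    exact h.symm
  have hsnd (y : Y) (r : ℝ) : (ψ (y, r)).2 = (ψ (y₀, r)).2 := by
    have h := hg (.inr (y, r)) (.inr (y₀, r))
    simp only [hψ, zdist, hfst, dist_eq_of_map_inl hg hgY, sub_self, abs_zero,
      min_eq_left hM.le, add_zero, add_eq_left, min_abs_eq_zero_iff hM, sub_eq_zero] at h
    exact h
  refine ⟨fun r => (ψ (y₀, r)).2, fun a b => ?_, fun y r => by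
    rw [hψ]
    exact congrArg Sum.inr (Prod.ext (hfst y r) (hsnd y r))⟩
  simpa [hψ, zdist, hfst] using hg (.inr (y₀, a)) (.inr (y₀, b))

end ZDist

/-- if `Y` is compact, then every surjective isometry `g` of
`(Z, d)` maps `Y` onto `Y` and `Y × ℝ` onto `Y × ℝ`, and there exist a surjective
isometry `g_Y` of `(Y, d₁)` and a surjective isometry `g_ℝ` of the Euclidean line
such that `g(y) = g_Y(y)` for all `y ∈ Y` and `g(y, r) = (g_Y(y), g_ℝ(r))` for all
`(y, r) ∈ Y × ℝ`. -/
theorem zspace_isometry_structure {Y : Type*} [MetricSpace Y] [CompactSpace Y]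
    (R M : ℝ) (hM : 0 < M) (hRM : M ≤ 2 * R)
    (g : Y ⊕ Y × ℝ → Y ⊕ Y × ℝ) (hgsurj : Function.Surjective g)
    (hgiso : ∀ a b : Y ⊕ Y × ℝ, zdist R M (g a) (g b) = zdist R M a b) :
    g '' Set.range (Sum.inl : Y → Y ⊕ Y × ℝ) = Set.range Sum.inl ∧
    g '' Set.range (Sum.inr : Y × ℝ → Y ⊕ Y × ℝ) = Set.range Sum.inr ∧
    ∃ (gY : Y → Y) (gR : ℝ → ℝ),
      Function.Surjective gY ∧ (∀ a b : Y, dist (gY a) (gY b) = dist a b) ∧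
      Function.Surjective gR ∧ (∀ a b : ℝ, dist (gR a) (gR b) = dist a b) ∧
      (∀ y : Y, g (Sum.inl y) = Sum.inl (gY y)) ∧
      (∀ (y : Y) (r : ℝ), g (Sum.inr (y, r)) = Sum.inr (gY y, gR r)) := by
  have hR : 0 < R := by linarith
  choose gY hgY using exists_map_inl_eq_inl hR hM hgiso hgsurj
  obtain ⟨gR, hgR_trunc, hgR⟩ :=
    exists_map_inr_eq_prodMap hM hgiso hgY (exists_map_inr_eq_inr hR hM hgiso)
  have hg : g = Sum.map gY (Prod.map gY gR) := by
    funext z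
    rcases z with y | ⟨y, r⟩
    · exact hgY y
    · exact hgR y r
  obtain ⟨hgY_surj, -⟩ := Sum.map_surjective.1 (hg ▸ hgsurj)
  obtain ⟨hgR_surj, hgR_dist⟩ := Real.surjective_and_dist_eq_of_min_abs_sub_eq hM hgR_trunc
  refine ⟨?_, ?_, gY, gR, hgY_surj, dist_eq_of_map_inl hgiso hgY, hgR_surj, hgR_dist, hgY, hgR⟩
  · rw [hg]
    exact Sum.image_map_range_inl hgY_surj _
  · rw [hg]
    exact Sum.image_map_range_inr _ (hgY_surj.prodMap hgR_surj)
end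

section
/- Let a group G act on a metric space X by isometries (each group element acts as a distance-preserving bijection). Then for any point x ∈ X, the orbit G·x is locally closed (i.e., open in its closure) if and only if it is closed in X. -/
/-- if a group `G` acts on a metric space `X` by isometries, then
for any point `x ∈ X` the orbit `G · x` is locally closed (open in its closure)
if and only if it is closed in `X`. -/
theorem orbit_isLocallyClosed_iff_isClosed {G X : Type*} [Group G]
    [MetricSpace X] [MulAction G X]
    (h : ∀ (g : G) (x y : X), dist (g • x) (g • y) = dist x y) (x : X) :
    IsLocallyClosed (MulAction.orbit G x) ↔ IsClosed (MulAction.orbit G x) := by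
  constructor
  · rintro ⟨U, Z, hU, hZ, hUZ⟩
    have hiso : ∀ g : G, Isometry (fun y : X => g • y) := fun g =>
      Isometry.of_dist_eq (fun a b => h g a b)
    have horb_sub : MulAction.orbit G x ⊆ Z := by
      rw [hUZ]; exact Set.inter_subset_right
    have hcl : closure (MulAction.orbit G x) ⊆ Z := hZ.closure_subset_iff.mpr horb_sub
    rw [← closure_subset_iff_isClosed]
    intro y hy
    have hxU : x ∈ U := by
      have hx : x ∈ MulAction.orbit G x := MulAction.mem_orbit_self x
      rw [hUZ] at hx; exact hx.1
    obtain ⟨ε, hε, hball⟩ := Metric.isOpen_iff.mp hU x hxU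
    obtain ⟨z, hz, hdz⟩ := Metric.mem_closure_iff.mp hy ε hε
    obtain ⟨g, rfl⟩ := hz
    -- w = g⁻¹ • y is in the closure of the orbit
    have hw : g⁻¹ • y ∈ closure (MulAction.orbit G x) := by
      have himg : (fun p : X => g⁻¹ • p) '' closure (MulAction.orbit G x)
          ⊆ closure (MulAction.orbit G x) := by
        refine (image_closure_subset_closure_image (hiso g⁻¹).continuous).trans ?_
        refine closure_mono ?_
        rintro p ⟨q, ⟨k, rfl⟩, rfl⟩
        exact ⟨g⁻¹ * k, by simp [mul_smul]⟩
      exact himg ⟨y, hy, rfl⟩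
    have hwball : g⁻¹ • y ∈ Metric.ball x ε := by
      have : dist x (g⁻¹ • y) = dist (g • x) y := by
        rw [← h g x (g⁻¹ • y), smul_inv_smul]
      simp only [Metric.mem_ball, dist_comm (g⁻¹ • y) x, this]
      rwa [dist_comm]
    have hwO : g⁻¹ • y ∈ MulAction.orbit G x := by
      rw [hUZ]; exact ⟨hball hwball, hcl hw⟩
    obtain ⟨k, hk⟩ := hwO
    exact ⟨g * k, by simp only [mul_smul]; rw [show k • x = g⁻¹ • y from hk, smul_inv_smul]⟩
  · exact fun hc => hc.isLocallyClosed
end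

section
/- In the torus example X = 𝕋 ∪ H, for every a ∈ ℝ the map φ_a : X → X defined by φ_a(y) = g(a) + y for y ∈ 𝕋 and φ_a(g(t), t) = (g(t + a), t + a) for points of H is a well-defined surjective isometry of (X, d). -/
/-- The 2-torus `𝕋 = AddCircle 1 × AddCircle 1` with the product (max) metric. -/
abbrev T2 : Type := AddCircle (1 : ℝ) × AddCircle (1 : ℝ)

/-- The dense one-parameter subgroup `g(t) = (t mod 1, αt mod 1)` of the torus. -/
noncomputable def torusFlow (α : ℝ) (t : ℝ) : T2 :=
  ((t : AddCircle (1 : ℝ)), ((α * t : ℝ) : AddCircle (1 : ℝ)))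

/-- The space `X = 𝕋 ∪ H` where `H = {(g(t), t) : t ∈ ℝ}`, as a subset of
`Z = 𝕋 ⊕ (𝕋 × ℝ)`. -/
def torusX (α : ℝ) : Set (T2 ⊕ T2 × ℝ) :=
  {z | ∃ y : T2, z = Sum.inl y} ∪ {z | ∃ t : ℝ, z = Sum.inr (torusFlow α t, t)}

theorem memT (α : ℝ) (y : T2) : (Sum.inl y : T2 ⊕ T2 × ℝ) ∈ torusX α :=
  Or.inl ⟨y, rfl⟩

theorem memH (α : ℝ) (t : ℝ) :
    (Sum.inr (torusFlow α t, t) : T2 ⊕ T2 × ℝ) ∈ torusX α :=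
  Or.inr ⟨t, rfl⟩

/-!
The map `φ_a` is the restriction to `X` of the map of `Z = 𝕋 ⊕ (𝕋 × ℝ)` that translates the torus
coordinate by `g(a)` and the real coordinate by `a`. Translations are isometries of `𝕋` and of `ℝ`,
so this map preserves the distance of the Z-construction; since `g` is a homomorphism it carries
`H` onto itself, and the map for `-a` inverts it.
-/

open Set Function

theorem zdist_map_of_isometry {Y : Type*} [MetricSpace Y] (R M : ℝ) {f : Y → Y}
    (hf : Isometry f) {h : ℝ → ℝ} (hh : Isometry h) (z w : Y ⊕ Y × ℝ) :
    zdist R M (Sum.map f (Prod.map f h) z) (Sum.map f (Prod.map f h) w) = zdist R M z w := by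
  have habs (s t : ℝ) : |h s - h t| = |s - t| := by
    rw [← Real.dist_eq, ← Real.dist_eq, hh.dist_eq]
  rcases z with y₁ | ⟨y₁, s⟩ <;> rcases w with y₂ | ⟨y₂, t⟩ <;>
    simp only [zdist, Sum.map_inl, Sum.map_inr, Prod.map, hf.dist_eq, habs]

theorem torusFlow_add (α s t : ℝ) : torusFlow α (s + t) = torusFlow α s + torusFlow α t := by
  simp only [torusFlow, mul_add, AddCircle.coe_add, Prod.mk_add_mk]

theorem torusFlow_zero (α : ℝ) : torusFlow α 0 = 0 := by
  simp only [torusFlow, mul_zero, AddCircle.coe_zero, Prod.mk_zero_zero]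

noncomputable def torusShift (α a : ℝ) : T2 ⊕ T2 × ℝ → T2 ⊕ T2 × ℝ :=
  Sum.map (torusFlow α a + ·) (Prod.map (torusFlow α a + ·) (· + a))

theorem zdist_torusShift (α a R M : ℝ) (z w : T2 ⊕ T2 × ℝ) :
    zdist R M (torusShift α a z) (torusShift α a w) = zdist R M z w :=
  zdist_map_of_isometry R M (isometry_add_left _) (isometry_add_right a) z w

theorem torusShift_inr_torusFlow (α a t : ℝ) :
    torusShift α a (Sum.inr (torusFlow α t, t)) = Sum.inr (torusFlow α (t + a), t + a) := by
  simp only [torusShift, Sum.map_inr, Prod.map, torusFlow_add, add_comm (torusFlow α a)]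

theorem mapsTo_torusShift (α a : ℝ) : MapsTo (torusShift α a) (torusX α) (torusX α) := by
  rintro _ (⟨y, rfl⟩ | ⟨t, rfl⟩)
  · exact memT α _
  · rw [torusShift_inr_torusFlow]
    exact memH α _

theorem torusShift_torusShift_neg (α a : ℝ) (z : T2 ⊕ T2 × ℝ) :
    torusShift α a (torusShift α (-a) z) = z := by
  rcases z with y | ⟨y, t⟩ <;>
    simp only [torusShift, Sum.map_inl, Sum.map_inr, Prod.map, ← add_assoc, ← torusFlow_add,
      add_neg_cancel, torusFlow_zero, zero_add, neg_add_cancel_right]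

theorem surjOn_torusShift (α a : ℝ) : SurjOn (torusShift α a) (torusX α) (torusX α) :=
  fun z hz => ⟨_, mapsTo_torusShift α (-a) hz, torusShift_torusShift_neg α a z⟩

theorem torus_translation_isometry_general (α : ℝ)
    (R M : ℝ) (a : ℝ) :
    ∃ φ : torusX α → torusX α,
      Function.Surjective φ ∧
      (∀ p q : torusX α, zdist R M (φ p).1 (φ q).1 = zdist R M p.1 q.1) ∧
      (∀ y : T2, (φ ⟨Sum.inl y, memT α y⟩).1 = Sum.inl (torusFlow α a + y)) ∧
      (∀ t : ℝ, (φ ⟨Sum.inr (torusFlow α t, t), memH α t⟩).1 =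
          Sum.inr (torusFlow α (t + a), t + a)) :=
  ⟨(mapsTo_torusShift α a).restrict, (mapsTo_torusShift α a).restrict_surjective_iff.2
      (surjOn_torusShift α a), fun p q => zdist_torusShift α a R M p q, fun _ => rfl,
    fun t => torusShift_inr_torusFlow α a t⟩

/-- in the torus example `X = 𝕋 ∪ H`, for every `a ∈ ℝ` the map
`φ_a : X → X` with `φ_a(y) = g(a) + y` on `𝕋` and `φ_a(g(t), t) = (g(t+a), t+a)`
on `H` is a well-defined surjective isometry of `(X, d)`. -/
theorem torus_translation_isometry (α : ℝ) (hα : Irrational α)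
    (R M : ℝ) (hM : 0 < M) (hRM : M ≤ 2 * R) (a : ℝ) :
    ∃ φ : torusX α → torusX α,
      Function.Surjective φ ∧
      (∀ p q : torusX α, zdist R M (φ p).1 (φ q).1 = zdist R M p.1 q.1) ∧
      (∀ y : T2, (φ ⟨Sum.inl y, memT α y⟩).1 = Sum.inl (torusFlow α a + y)) ∧
      (∀ t : ℝ, (φ ⟨Sum.inr (torusFlow α t, t), memH α t⟩).1 =
          Sum.inr (torusFlow α (t + a), t + a)) :=
  torus_translation_isometry_general α R M a
end

section
/- In the torus example X = 𝕋 ∪ H, for every a ∈ ℝ the map ψ_a : X → X defined by ψ_a(y) = g(2a) − y for y ∈ 𝕋 and ψ_a(g(t), t) = (g(2a − t), 2a − t) for points of H (the 'reflection at a') is a well-defined surjective isometry of (X, d). -/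
noncomputable def torusRefl (α a : ℝ) : T2 ⊕ T2 × ℝ → T2 ⊕ T2 × ℝ
  | Sum.inl y => Sum.inl (torusFlow α (2 * a) - y)
  | Sum.inr p => Sum.inr (torusFlow α (2 * a - p.2), 2 * a - p.2)

lemma torusFlow_sub (α s t : ℝ) :
    torusFlow α (s - t) = torusFlow α s - torusFlow α t := by
  unfold torusFlow
  simp [Prod.ext_iff, mul_sub, ← QuotientAddGroup.mk_sub]

lemma torusRefl_mem (α a : ℝ) (z : T2 ⊕ T2 × ℝ) : torusRefl α a z ∈ torusX α := by
  cases z with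
  | inl y => exact memT α _
  | inr p => exact memH α _

/-- in the torus example `X = 𝕋 ∪ H`, for every `a ∈ ℝ` the map
`ψ_a : X → X` with `ψ_a(y) = g(2a) - y` on `𝕋` and
`ψ_a(g(t), t) = (g(2a - t), 2a - t)` on `H` (the reflection at `a`) is a
well-defined surjective isometry of `(X, d)`. -/
theorem torus_reflection_isometry (α : ℝ) (hα : Irrational α)
    (R M : ℝ) (hM : 0 < M) (hRM : M ≤ 2 * R) (a : ℝ) :
    ∃ ψ : torusX α → torusX α,
      Function.Surjective ψ ∧
      (∀ p q : torusX α, zdist R M (ψ p).1 (ψ q).1 = zdist R M p.1 q.1) ∧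
      (∀ y : T2, (ψ ⟨Sum.inl y, memT α y⟩).1 = Sum.inl (torusFlow α (2 * a) - y)) ∧
      (∀ t : ℝ, (ψ ⟨Sum.inr (torusFlow α t, t), memH α t⟩).1 =
          Sum.inr (torusFlow α (2 * a - t), 2 * a - t)) := by
  refine ⟨fun z => ⟨torusRefl α a z.1, torusRefl_mem α a z.1⟩, ?_, ?_, fun y => rfl, fun t => rfl⟩
  · intro z
    refine ⟨⟨torusRefl α a z.1, torusRefl_mem α a z.1⟩, Subtype.ext ?_⟩
    rcases z.2 with ⟨y, hy⟩ | ⟨t, ht⟩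
    · simp [hy, torusRefl, sub_sub_cancel]
    · simp only [ht, torusRefl]
      congr 1
      have h2 : 2 * a - (2 * a - t) = t := by ring
      rw [h2]
  · rintro ⟨p, hp⟩ ⟨q, hq⟩
    rcases hp with ⟨y₁, rfl⟩ | ⟨t₁, rfl⟩ <;> rcases hq with ⟨y₂, rfl⟩ | ⟨t₂, rfl⟩ <;>
      simp only [torusRefl, zdist, torusFlow_sub, dist_sub_left]
    · congr 1
      rw [show 2 * a - t₁ - (2 * a - t₂) = -(t₁ - t₂) by ring, abs_neg]
end

section
/- The torus example X = 𝕋 ∪ H, with the metric d induced from Z, is a complete and locally compact metric space. -/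
theorem torusFlow_continuous (α : ℝ) : Continuous (torusFlow α) := by
  unfold torusFlow
  exact (AddCircle.continuous_mk' 1).prodMk
    ((AddCircle.continuous_mk' 1).comp (continuous_const.mul continuous_id))

/-- Abstract version: a metric space covered by an isometric copy of the torus and a
continuous line at mutual distance `R`, with the truncated metric on the line,
is complete and locally compact. -/
theorem torusX_aux (α : ℝ) {X : Type*} [MetricSpace X] (R M : ℝ)
    (hM : 0 < M) (hRM : M ≤ 2 * R)
    (i : T2 → X) (p : ℝ → X)
    (hsurj : ∀ x : X, (∃ y, x = i y) ∨ (∃ t, x = p t))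
    (dII : ∀ y y', dist (i y) (i y') = dist y y')
    (dIH : ∀ y t, dist (i y) (p t) = dist y (torusFlow α t) + R)
    (dHI : ∀ t y, dist (p t) (i y) = dist (torusFlow α t) y + R)
    (dHH : ∀ s t, dist (p s) (p t)
      = dist (torusFlow α s) (torusFlow α t) + min |s - t| M) :
    CompleteSpace X ∧ LocallyCompactSpace X := by
  have hR : 0 < R := by linarith
  have hgc : Continuous (torusFlow α) := torusFlow_continuous α
  haveI : Fact ((0:ℝ) < 1) := ⟨one_pos⟩
  have hι : Isometry i := Isometry.of_dist_eq dII
  have hφc : Continuous p := by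
    rw [continuous_iff_continuousAt]
    intro t
    have h1 : Filter.Tendsto
        (fun s => dist (torusFlow α s) (torusFlow α t) + |s - t|) (nhds t) (nhds 0) := by
      have ha : Filter.Tendsto (fun s => dist (torusFlow α s) (torusFlow α t))
          (nhds t) (nhds 0) := by
        have := (hgc.tendsto t).dist (tendsto_const_nhds (x := torusFlow α t))
        simpa using this
      have hb : Filter.Tendsto (fun s : ℝ => |s - t|) (nhds t) (nhds 0) := by
        have : Filter.Tendsto (fun s : ℝ => dist s t) (nhds t) (nhds 0) := by
          simpa using (continuous_id.tendsto t).dist (tendsto_const_nhds (x := t))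
        simpa [Real.dist_eq] using this
      simpa using ha.add hb
    have h2 : ∀ s, dist (p s) (p t)
        ≤ dist (torusFlow α s) (torusFlow α t) + |s - t| := fun s => by
      rw [dHH]; gcongr; exact min_le_left _ _
    exact tendsto_iff_dist_tendsto_zero.mpr
      (squeeze_zero (fun s => dist_nonneg) h2 h1)
  constructor
  · -- Completeness
    apply Metric.complete_of_cauchySeq_tendsto
    intro u hu
    obtain ⟨N, hN⟩ := Metric.cauchySeq_iff.mp hu (min R M) (lt_min hR hM)
    set v : ℕ → X := fun n => u (n + N) with hvdef
    have hv : CauchySeq v := by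
      refine Metric.cauchySeq_iff.mpr fun ε hε => ?_
      obtain ⟨K, hK⟩ := Metric.cauchySeq_iff.mp hu ε hε
      exact ⟨K, fun m hm n hn => hK _ (le_trans hm (Nat.le_add_right m N)) _
        (le_trans hn (Nat.le_add_right n N))⟩
    have hvN : ∀ n, dist (v 0) (v n) < min R M := fun n =>
      hN _ (Nat.le_add_left N 0) _ (Nat.le_add_left N n)
    suffices h : ∃ a, Filter.Tendsto v Filter.atTop (nhds a) by
      obtain ⟨a, ha⟩ := h
      exact ⟨a, (Filter.tendsto_add_atTop_iff_nat N).mp ha⟩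
    rcases hsurj (v 0) with ⟨y₀, hy₀⟩ | ⟨t₀, ht₀⟩
    · -- everything lies in the torus copy
      have hall : ∀ n, ∃ y, v n = i y := by
        intro n
        rcases hsurj (v n) with ⟨y, h⟩ | ⟨t, h⟩
        · exact ⟨y, h⟩
        · exfalso
          have h1 := hvN n
          rw [hy₀, h, dIH] at h1
          have h2 := min_le_left R M
          have h3 := dist_nonneg (x := y₀) (y := torusFlow α t)
          linarith
      choose w hw using hall
      have hdw : ∀ m n, dist (v m) (v n) = dist (w m) (w n) := fun m n => by
        rw [hw m, hw n, dII]
      have hwC : CauchySeq w := by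
        refine Metric.cauchySeq_iff.mpr fun ε hε => ?_
        obtain ⟨K, hK⟩ := Metric.cauchySeq_iff.mp hv ε hε
        exact ⟨K, fun m hm n hn => by rw [← hdw]; exact hK m hm n hn⟩
      obtain ⟨y, hy⟩ := cauchySeq_tendsto_of_complete hwC
      refine ⟨i y, tendsto_iff_dist_tendsto_zero.mpr ?_⟩
      have heq : ∀ n, dist (v n) (i y) = dist (w n) y := fun n => by
        rw [hw n, dII]
      simpa [heq] using tendsto_iff_dist_tendsto_zero.mp hy
    · -- everything lies on the line H
      have hall : ∀ n, ∃ t, v n = p t := by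
        intro n
        rcases hsurj (v n) with ⟨y, h⟩ | ⟨t, h⟩
        · exfalso
          have h1 := hvN n
          rw [ht₀, h, dHI] at h1
          have h2 := min_le_left R M
          have h3 := dist_nonneg (x := torusFlow α t₀) (y := y)
          linarith
        · exact ⟨t, h⟩
      choose τ hτ using hall
      have hdτ : ∀ m n, dist (v m) (v n)
          = dist (torusFlow α (τ m)) (torusFlow α (τ n)) + min |τ m - τ n| M :=
        fun m n => by rw [hτ m, hτ n, dHH]
      have hτC : CauchySeq τ := by
        refine Metric.cauchySeq_iff.mpr fun ε hε => ?_
        obtain ⟨K, hK⟩ := Metric.cauchySeq_iff.mp hv (min ε M) (lt_min hε hM)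
        refine ⟨K, fun m hm n hn => ?_⟩
        have h1 : min |τ m - τ n| M < min ε M := by
          have h0 := hK m hm n hn
          rw [hdτ] at h0
          have := dist_nonneg (x := torusFlow α (τ m)) (y := torusFlow α (τ n))
          linarith
        rw [Real.dist_eq]
        rcases le_total |τ m - τ n| M with h | h
        · rw [min_eq_left h] at h1
          exact h1.trans_le (min_le_left _ _)
        · rw [min_eq_right h] at h1
          exact absurd h1 (not_lt.mpr (min_le_right ε M))
      obtain ⟨t, ht⟩ := cauchySeq_tendsto_of_complete hτC
      refine ⟨p t, tendsto_iff_dist_tendsto_zero.mpr ?_⟩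
      have hle : ∀ n, dist (v n) (p t)
          ≤ dist (torusFlow α (τ n)) (torusFlow α t) + |τ n - t| := by
        intro n
        rw [hτ n, dHH]; gcongr; exact min_le_left _ _
      have h0 : Filter.Tendsto
          (fun n => dist (torusFlow α (τ n)) (torusFlow α t) + |τ n - t|)
          Filter.atTop (nhds 0) := by
        have ha : Filter.Tendsto (fun n => dist (torusFlow α (τ n)) (torusFlow α t))
            Filter.atTop (nhds 0) := by
          have := ((hgc.tendsto t).comp ht).dist (tendsto_const_nhds (x := torusFlow α t))
          simpa [Function.comp] using this
        have hb : Filter.Tendsto (fun n => |τ n - t|) Filter.atTop (nhds 0) := by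
          simpa [Real.dist_eq] using tendsto_iff_dist_tendsto_zero.mp ht
        simpa using ha.add hb
      exact squeeze_zero (fun n => dist_nonneg) hle h0
  · -- Local compactness
    haveI : WeaklyLocallyCompactSpace X := by
      constructor
      intro x
      rcases hsurj x with ⟨y, hy⟩ | ⟨t, ht⟩
      · refine ⟨Set.range i, isCompact_range hι.continuous, ?_⟩
        refine Filter.mem_of_superset (Metric.ball_mem_nhds x hR) ?_
        intro z hz
        rcases hsurj z with ⟨y', hy'⟩ | ⟨s, hs⟩
        · exact ⟨y', hy'.symm⟩
        · exfalso
          have hzx : dist z x < R := Metric.mem_ball.mp hz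
          rw [hs, hy, dHI] at hzx
          have := dist_nonneg (x := torusFlow α s) (y := y)
          linarith
      · set r : ℝ := min R M / 2 with hrdef
        have hr : 0 < r := by positivity
        have hrR : r < R := by
          have := min_le_left R M; rw [hrdef]; linarith
        have hrM : r < M := by
          have := min_le_right R M; rw [hrdef]; linarith
        refine ⟨p '' Set.Icc (t - r) (t + r), isCompact_Icc.image hφc, ?_⟩
        refine Filter.mem_of_superset (Metric.ball_mem_nhds x hr) ?_
        intro z hz
        have hzx : dist z x < r := Metric.mem_ball.mp hz
        rcases hsurj z with ⟨y', hy'⟩ | ⟨s, hs⟩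
        · exfalso
          rw [hy', ht, dIH] at hzx
          have := dist_nonneg (x := y') (y := torusFlow α t)
          linarith
        · rw [hs, ht, dHH] at hzx
          have h2 : min |s - t| M < r := by
            have := dist_nonneg (x := torusFlow α s) (y := torusFlow α t)
            linarith
          have h3 : |s - t| < r := by
            rcases le_total |s - t| M with h | h
            · rwa [min_eq_left h] at h2
            · rw [min_eq_right h] at h2; linarith
          rw [abs_sub_lt_iff] at h3
          exact ⟨s, ⟨by linarith [h3.2], by linarith [h3.1]⟩, hs.symm⟩
    infer_instance

/-- the torus example `X = 𝕋 ∪ H`, with the metric `d` induced from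
`Z`, is a complete and locally compact metric space. -/
theorem torusX_complete_locallyCompact (α : ℝ) (hα : Irrational α)
    (R M : ℝ) (hM : 0 < M) (hRM : M ≤ 2 * R)
    (mX : MetricSpace (torusX α))
    (hd : ∀ a b : torusX α, @dist _ mX.toDist a b = zdist R M a.1 b.1) :
    @CompleteSpace _ mX.toUniformSpace ∧
    @LocallyCompactSpace _ mX.toUniformSpace.toTopologicalSpace := by
  letI := mX
  refine torusX_aux α R M hM hRM
    (fun y => ⟨Sum.inl y, memT α y⟩) (fun t => ⟨Sum.inr (torusFlow α t, t), memH α t⟩)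
    ?_ ?_ ?_ ?_ ?_
  · intro x
    rcases x.2 with ⟨y, hy⟩ | ⟨t, ht⟩
    · exact Or.inl ⟨y, Subtype.ext hy⟩
    · exact Or.inr ⟨t, Subtype.ext ht⟩
  · intro y y'; rw [hd]; rfl
  · intro y t; rw [hd]; rfl
  · intro t y; rw [hd]; rfl
  · intro s t; rw [hd]; rfl
end

section
/- There exists a metric space X that is complete, locally compact, and has exactly two connected components, such that the group of surjective isometries of X has an orbit that is not closed in X. (This answers negatively the question of Gao and Kechris whether the isometry group of a locally compact complete metric space with finitely many connected components must have closed orbits.) -/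
/-!
Glue the line `ℝ`, with its metric truncated at `1`, to the circle `ℝ/ℤ`, putting the line
point `s` at distance `2 + (dist b (√2 s) + dist s ℤ) / 4` from the circle point `b`. Two points
at distance `1` lie on the line, so an isometry maps the line point `0` to a line point; and a
line point `s` is at distance exactly `2` from a circle point `b` only if `s = k ∈ ℤ` and
`b = k √2`. Hence every
isometry moves the circle point `0` into `ℤ √2`, while the shifts `(s, b) ↦ (s + k, b + k √2)`
show that all of `ℤ √2` is reached. This orbit is dense in the circle but not all of it.
-/

open Set Metric Topology

noncomputable section

def Truncated (α : Type*) : Type _ := α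

namespace Truncated

variable {α : Type*}

def toTruncated : α ≃ Truncated α := Equiv.refl α

variable [MetricSpace α]

/-- The uniformity is that of `α`, so topological and completeness instances transfer. -/
instance : MetricSpace (Truncated α) where
  dist x y := min (dist (toTruncated.symm x) (toTruncated.symm y)) 1
  dist_self x := by simp
  dist_comm x y := by simp only [dist_comm]
  dist_triangle x y z := by
    have := dist_triangle (toTruncated.symm x) (toTruncated.symm y) (toTruncated.symm z)
    simp only [min_def]
    split_ifs <;> linarith [dist_nonneg (x := toTruncated.symm x) (y := toTruncated.symm y),
      dist_nonneg (x := toTruncated.symm y) (y := toTruncated.symm z)]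
  eq_of_dist_eq_zero {x y} h := by
    have : dist (toTruncated.symm x) (toTruncated.symm y) = 0 := by
      rcases min_choice (dist (toTruncated.symm x) (toTruncated.symm y)) 1 with h' | h' <;>
        simp_all
    exact toTruncated.symm.injective (dist_eq_zero.1 this)
  toUniformSpace := ‹MetricSpace α›.toUniformSpace
  uniformity_dist := by
    refine ((uniformity_basis_dist (α := α)).to_hasBasis
      (fun ε hε => ⟨min ε 1, by positivity, fun p hp => ?_⟩)
      (fun ε hε => ⟨ε, hε, fun p (hp : dist p.1 p.2 < ε) => (min_le_left _ _).trans_lt hp⟩)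
      ).eq_biInf
    change min (dist p.1 p.2) 1 < min ε 1 at hp
    change dist p.1 p.2 < ε
    grind

@[simp]
lemma dist_toTruncated (x y : α) : dist (toTruncated x) (toTruncated y) = min (dist x y) 1 := rfl

instance [CompleteSpace α] : CompleteSpace (Truncated α) := inferInstanceAs (CompleteSpace α)

instance [LocallyCompactSpace α] : LocallyCompactSpace (Truncated α) :=
  inferInstanceAs (LocallyCompactSpace α)

instance [ConnectedSpace α] : ConnectedSpace (Truncated α) := inferInstanceAs (ConnectedSpace α)

def congr {β : Type*} [MetricSpace β] (e : α ≃ᵢ β) : Truncated α ≃ᵢ Truncated β where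
  toEquiv := toTruncated.symm.trans (e.toEquiv.trans toTruncated)
  isometry_toFun := Isometry.of_dist_eq fun x y =>
    congrArg (min · 1) (e.dist_eq (toTruncated.symm x) (toTruncated.symm y))

end Truncated

/-- The distance `gap + toFun a b` between `a : α` and `b : β` extends the metrics of `α` and `β`
to a metric on `α ⊕ β` (see `MetricCoupling.Space`). -/
structure MetricCoupling (α β : Type*) [MetricSpace α] [MetricSpace β] where
  gap : ℝ
  toFun : α → β → ℝ
  gap_pos : 0 < gap
  nonneg : ∀ a b, 0 ≤ toFun a b
  le_dist_add_left : ∀ a a' b, toFun a b ≤ dist a a' + toFun a' b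
  le_dist_add_right : ∀ a b b', toFun a b ≤ dist b b' + toFun a b'
  dist_le_left : ∀ a a' : α, dist a a' ≤ 2 * gap
  dist_le_right : ∀ b b' : β, dist b b' ≤ 2 * gap

namespace MetricCoupling

variable {α β : Type*} [MetricSpace α] [MetricSpace β] (h : MetricCoupling α β)

def Space (_ : MetricCoupling α β) : Type _ := α ⊕ β

def inl : α → h.Space := Sum.inl

def inr : β → h.Space := Sum.inr

def sumDist : α ⊕ β → α ⊕ β → ℝ
  | .inl a, .inl a' => dist a a'
  | .inl a, .inr b => h.gap + h.toFun a b
  | .inr b, .inl a => h.gap + h.toFun a b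
  | .inr b, .inr b' => dist b b'

instance : MetricSpace h.Space where
  dist := h.sumDist
  dist_self x := by cases x <;> simp [sumDist]
  dist_comm x y := by cases x <;> cases y <;> simp [sumDist, dist_comm]
  dist_triangle x y z := by
    rcases x with a | b <;> rcases y with a' | b' <;> rcases z with a'' | b'' <;>
      simp only [sumDist]
    · exact dist_triangle a a' a''
    · linarith [h.le_dist_add_left a a' b'']
    · linarith [h.dist_le_left a a'', h.nonneg a b', h.nonneg a'' b']
    · linarith [h.le_dist_add_right a b'' b', dist_comm b' b'']
    · linarith [h.le_dist_add_left a'' a' b, dist_comm a' a'']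
    · linarith [h.dist_le_right b b'', h.nonneg a' b, h.nonneg a' b'']
    · linarith [h.le_dist_add_right a'' b b', dist_comm b b']
    · exact dist_triangle b b' b''
  eq_of_dist_eq_zero {x y} hxy := by
    rcases x with a | b <;> rcases y with a' | b' <;> simp only [sumDist] at hxy
    · rw [dist_eq_zero.1 hxy]
    · linarith [h.gap_pos, h.nonneg a b']
    · linarith [h.gap_pos, h.nonneg a' b]
    · rw [dist_eq_zero.1 hxy]

@[simp] lemma dist_inl_inl (a a' : α) : dist (h.inl a) (h.inl a') = dist a a' := rfl

@[simp] lemma dist_inl_inr (a : α) (b : β) : dist (h.inl a) (h.inr b) = h.gap + h.toFun a b := rfl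

@[simp] lemma dist_inr_inr (b b' : β) : dist (h.inr b) (h.inr b') = dist b b' := rfl

lemma isometry_inl : Isometry h.inl := Isometry.of_dist_eq h.dist_inl_inl

lemma isometry_inr : Isometry h.inr := Isometry.of_dist_eq h.dist_inr_inr

lemma isCompl_range_inl_range_inr : IsCompl (range h.inl) (range h.inr) :=
  Set.isCompl_range_inl_range_inr

lemma ball_inl_subset (a : α) : ball (h.inl a) h.gap ⊆ range h.inl := by
  rintro (a' | b) hx
  · exact ⟨a', rfl⟩
  · have : h.gap + h.toFun a b < h.gap := hx
    linarith [h.nonneg a b]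

lemma ball_inr_subset (b : β) : ball (h.inr b) h.gap ⊆ range h.inr := by
  rintro (a | b') hx
  · have : h.gap + h.toFun a b < h.gap := hx
    linarith [h.nonneg a b]
  · exact ⟨b', rfl⟩

lemma isOpen_range_inl : IsOpen (range h.inl) :=
  isOpen_iff.2 <| by rintro _ ⟨a, rfl⟩; exact ⟨h.gap, h.gap_pos, h.ball_inl_subset a⟩

lemma isOpen_range_inr : IsOpen (range h.inr) :=
  isOpen_iff.2 <| by rintro _ ⟨b, rfl⟩; exact ⟨h.gap, h.gap_pos, h.ball_inr_subset b⟩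

lemma isClopen_range_inl : IsClopen (range h.inl) :=
  ⟨h.isCompl_range_inl_range_inr.eq_compl ▸ h.isOpen_range_inr.isClosed_compl,
    h.isOpen_range_inl⟩

lemma isClopen_range_inr : IsClopen (range h.inr) :=
  ⟨h.isCompl_range_inl_range_inr.symm.eq_compl ▸ h.isOpen_range_inl.isClosed_compl,
    h.isOpen_range_inr⟩

lemma isClosedEmbedding_inr : IsClosedEmbedding h.inr :=
  ⟨h.isometry_inr.isEmbedding, h.isClopen_range_inr.isClosed⟩

lemma isOpenEmbedding_inl : IsOpenEmbedding h.inl :=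
  ⟨h.isometry_inl.isEmbedding, h.isOpen_range_inl⟩

lemma isOpenEmbedding_inr : IsOpenEmbedding h.inr :=
  ⟨h.isometry_inr.isEmbedding, h.isOpen_range_inr⟩

instance [CompleteSpace α] [CompleteSpace β] : CompleteSpace h.Space := by
  have hcover : range h.inl ∪ range h.inr = univ := h.isCompl_range_inl_range_inr.sup_eq_top
  rw [completeSpace_iff_isComplete_univ, ← hcover]
  exact h.isometry_inl.isUniformInducing.isComplete_range.union
    h.isometry_inr.isUniformInducing.isComplete_range

instance [WeaklyLocallyCompactSpace α] [WeaklyLocallyCompactSpace β] :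
    WeaklyLocallyCompactSpace h.Space where
  exists_compact_mem_nhds := by
    rintro (a | b)
    · obtain ⟨K, hK, hKa⟩ := exists_compact_mem_nhds a
      exact ⟨h.inl '' K, hK.image h.isometry_inl.continuous,
        h.isOpenEmbedding_inl.image_mem_nhds.2 hKa⟩
    · obtain ⟨K, hK, hKb⟩ := exists_compact_mem_nhds b
      exact ⟨h.inr '' K, hK.image h.isometry_inr.continuous,
        h.isOpenEmbedding_inr.image_mem_nhds.2 hKb⟩

def connectedComponentsEquiv [ConnectedSpace α] [ConnectedSpace β] :
    ConnectedComponents h.Space ≃ Fin 2 :=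
  (ConnectedComponents.equivOfIsClopenOfIsConnected
    (U := fun i => cond i (range h.inl) (range h.inr))
    (Bool.forall_bool.2 ⟨h.isClopen_range_inr, h.isClopen_range_inl⟩)
    (pairwise_disjoint_on_bool.2 h.isCompl_range_inl_range_inr.disjoint)
    (by rw [← iSup_eq_iUnion, iSup_bool_eq]; exact h.isCompl_range_inl_range_inr.sup_eq_top)
    (Bool.forall_bool.2 ⟨isConnected_range h.isometry_inr.continuous,
      isConnected_range h.isometry_inl.continuous⟩)).trans finTwoEquiv.symm

def sumCongr (f : α ≃ᵢ α) (g : β ≃ᵢ β) (hfg : ∀ a b, h.toFun (f a) (g b) = h.toFun a b) :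
    h.Space ≃ᵢ h.Space where
  toEquiv := Equiv.sumCongr f.toEquiv g.toEquiv
  isometry_toFun := Isometry.of_dist_eq <| by
    rintro (a | b) (a' | b')
    · exact f.dist_eq a a'
    · exact congrArg (h.gap + ·) (hfg a b')
    · exact congrArg (h.gap + ·) (hfg a' b)
    · exact g.dist_eq b b'

end MetricCoupling

namespace AddCircle

lemma dist_coe_le_half (x y : UnitAddCircle) : dist x y ≤ 1 / 2 := by
  simpa [dist_eq_norm] using norm_le_half_period (1 : ℝ) one_ne_zero (x := x - y)

lemma dist_coe_mul_le {r : ℝ} (hr : |r| ≤ 2) (s t : ℝ) :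
    dist ((r * s : ℝ) : UnitAddCircle) ↑(r * t) ≤ 2 * min |s - t| 1 := by
  have hcoe : dist ((r * s : ℝ) : UnitAddCircle) ↑(r * t) ≤ |r| * |s - t| := by
    rw [dist_eq_norm, ← coe_sub, ← abs_mul, mul_sub]
    exact QuotientAddGroup.norm_mk_le_norm
  have hhalf := dist_coe_le_half ((r * s : ℝ) : UnitAddCircle) ↑(r * t)
  rcases min_cases |s - t| 1 with ⟨hmin, -⟩ | ⟨hmin, -⟩ <;> rw [hmin]
  · nlinarith [abs_nonneg (s - t)]
  · linarith

theorem not_isClosed_range_zsmul {a : ℝ} (ha : Irrational a) :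
    ¬ IsClosed (range fun k : ℤ => k • (a : UnitAddCircle)) := by
  intro hclosed
  have hdense : DenseRange fun k : ℤ => k • (a : UnitAddCircle) :=
    denseRange_zsmul_coe_iff.2 (by simpa using ha)
  obtain ⟨k, hk⟩ : ((a / 2 : ℝ) : UnitAddCircle) ∈ range fun k : ℤ => k • (a : UnitAddCircle) := by
    rw [hclosed.closure_eq.symm.trans hdense.closure_range]; trivial
  dsimp only at hk
  rw [← coe_zsmul, ← sub_eq_zero, ← coe_sub, coe_eq_zero_iff] at hk
  obtain ⟨m, hm⟩ := hk
  rw [zsmul_eq_mul, zsmul_eq_mul, mul_one] at hm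
  refine (ha.mul_ratCast (q := k - 1 / 2) fun hk0 => ?_).ne_int m ?_
  · have : ((2 * k : ℤ) : ℚ) = 1 := by push_cast; linarith
    norm_cast at this
    omega
  · push_cast
    linarith

end AddCircle

namespace WindingCoupling

open Truncated AddCircle

def twist (s : ℝ) (b : UnitAddCircle) : ℝ :=
  (dist b ↑(√2 * s) + dist (s : UnitAddCircle) 0) / 4

lemma abs_sqrt_two_le : |√2| ≤ 2 := by
  rw [abs_of_nonneg (Real.sqrt_nonneg 2), Real.sqrt_le_left (by norm_num)]
  norm_num

lemma twist_le_dist_add_left (s t : ℝ) (b : UnitAddCircle) :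
    twist s b ≤ min |s - t| 1 + twist t b := by
  have hb := dist_triangle b ↑(√2 * t) ↑(√2 * s)
  have hs := dist_triangle (s : UnitAddCircle) t 0
  have hsqrt := dist_coe_mul_le abs_sqrt_two_le t s
  have hone := dist_coe_mul_le (r := 1) (by norm_num) s t
  simp only [one_mul] at hone
  rw [abs_sub_comm] at hsqrt
  unfold twist
  linarith

lemma twist_le_dist_add_right (s : ℝ) (b c : UnitAddCircle) :
    twist s b ≤ dist b c + twist s c := by
  unfold twist
  linarith [dist_triangle b c ↑(√2 * s), dist_nonneg (x := b) (y := c)]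

lemma twist_eq_zero_iff {s : ℝ} {b : UnitAddCircle} :
    twist s b = 0 ↔ ∃ k : ℤ, s = k ∧ b = k • (√2 : UnitAddCircle) := by
  have h₁ := dist_nonneg (x := b) (y := ↑(√2 * s))
  have h₂ := dist_nonneg (x := (s : UnitAddCircle)) (y := 0)
  constructor
  · intro hzero
    unfold twist at hzero
    have hb : b = ↑(√2 * s) := dist_eq_zero.1 (by linarith)
    have hs : (s : UnitAddCircle) = 0 := dist_eq_zero.1 (by linarith)
    obtain ⟨k, rfl⟩ : ∃ k : ℤ, k = s := by
      obtain ⟨k, hk⟩ := (coe_eq_zero_iff (1 : ℝ)).1 hs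
      exact ⟨k, by simpa using hk⟩
    refine ⟨k, rfl, ?_⟩
    rw [hb, mul_comm, ← zsmul_eq_mul, coe_zsmul]
  · rintro ⟨k, rfl, rfl⟩
    have hk : ((k : ℝ) : UnitAddCircle) = 0 := (coe_eq_zero_iff (1 : ℝ)).2 ⟨k, by simp⟩
    simp [twist, hk, mul_comm √2, ← zsmul_eq_mul]

lemma twist_nonneg (s : ℝ) (b : UnitAddCircle) : 0 ≤ twist s b := by
  unfold twist
  positivity

lemma twist_add_int (s : ℝ) (b : UnitAddCircle) (k : ℤ) :
    twist (s + k) (b + k • (√2 : UnitAddCircle)) = twist s b := by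
  have hk : ((k : ℝ) : UnitAddCircle) = 0 := (coe_eq_zero_iff (1 : ℝ)).2 ⟨k, by simp⟩
  rw [twist, twist, mul_add, coe_add, coe_add, hk, add_zero, mul_comm √2 k, ← zsmul_eq_mul,
    coe_zsmul, dist_add_right]

def coupling : MetricCoupling (Truncated ℝ) UnitAddCircle where
  gap := 2
  toFun s b := twist (toTruncated.symm s) b
  gap_pos := two_pos
  nonneg s b := twist_nonneg _ b
  le_dist_add_left s t b := twist_le_dist_add_left _ _ b
  le_dist_add_right s b c := twist_le_dist_add_right _ b c
  dist_le_left s t := (min_le_right _ _).trans (by norm_num)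
  dist_le_right b c := (dist_coe_le_half b c).trans (by norm_num)

@[simp] lemma coupling_gap : coupling.gap = 2 := rfl

@[simp] lemma coupling_toFun (s : Truncated ℝ) (b : UnitAddCircle) :
    coupling.toFun s b = twist (toTruncated.symm s) b := rfl

local notation "X" => coupling.Space

def shift (k : ℤ) : X ≃ᵢ X :=
  coupling.sumCongr (Truncated.congr (IsometryEquiv.addRight (k : ℝ)))
    (IsometryEquiv.addRight (k • (√2 : UnitAddCircle))) fun _ b => twist_add_int _ b k

lemma shift_inr_zero (k : ℤ) :
    shift k (coupling.inr 0) = coupling.inr (k • (√2 : UnitAddCircle)) :=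
  congrArg coupling.inr (zero_add (k • (√2 : UnitAddCircle)))

lemma mem_range_inl_of_dist_eq_one {x y : X} (hxy : dist x y = 1) :
    x ∈ range coupling.inl := by
  rcases x with s | b
  · exact ⟨s, rfl⟩
  · rcases y with t | c
    · have : 2 + twist (toTruncated.symm t) b = 1 := hxy
      linarith [twist_nonneg (toTruncated.symm t) b]
    · have : dist b c = 1 := hxy
      linarith [dist_coe_le_half b c]

lemma exists_int_of_dist_inl_eq_two {s : Truncated ℝ} {y : X}
    (hy : dist (coupling.inl s) y = 2) :
    ∃ k : ℤ, coupling.inr (k • (√2 : UnitAddCircle)) = y := by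
  rcases y with t | b
  · have : min (dist (toTruncated.symm s) (toTruncated.symm t)) 1 = 2 := hy
    linarith [min_le_right (dist (toTruncated.symm s) (toTruncated.symm t)) 1]
  · have : 2 + twist (toTruncated.symm s) b = 2 := hy
    obtain ⟨k, -, rfl⟩ := twist_eq_zero_iff.1 (by linarith)
    exact ⟨k, rfl⟩

lemma orbit_inr_zero :
    {y : X | ∃ φ : X → X, Function.Surjective φ ∧ Isometry φ ∧ φ (coupling.inr 0) = y} =
      coupling.inr '' range fun k : ℤ => k • (√2 : UnitAddCircle) := by
  ext y
  constructor
  · rintro ⟨φ, -, hφ, rfl⟩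
    obtain ⟨s, hs⟩ := mem_range_inl_of_dist_eq_one (x := φ (coupling.inl (toTruncated 0)))
      (y := φ (coupling.inl (toTruncated 1))) (by rw [hφ.dist_eq]; simp)
    obtain ⟨k, hk⟩ := exists_int_of_dist_inl_eq_two (s := s) (y := φ (coupling.inr 0))
      (by rw [hs, hφ.dist_eq]; simp [twist])
    exact ⟨_, ⟨k, rfl⟩, hk⟩
  · rintro ⟨_, ⟨k, rfl⟩, rfl⟩
    exact ⟨shift k, (shift k).surjective, (shift k).isometry, shift_inr_zero k⟩

end WindingCoupling

end

/-- there exists a metric space `X` that is complete, locally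
compact, and has exactly two connected components, such that the group of
surjective isometries of `X` has an orbit that is not closed in `X`.
(This answers negatively the question of Gao and Kechris.) -/
theorem exists_complete_locallyCompact_two_components_nonclosed_orbit :
    ∃ (X : Type) (_ : MetricSpace X),
      CompleteSpace X ∧
      LocallyCompactSpace X ∧
      Nonempty (ConnectedComponents X ≃ Fin 2) ∧
      ∃ x : X, ¬ IsClosed
        {y : X | ∃ φ : X → X, Function.Surjective φ ∧ Isometry φ ∧ φ x = y} := by
  refine ⟨WindingCoupling.coupling.Space, inferInstance, inferInstance, inferInstance,
    ⟨WindingCoupling.coupling.connectedComponentsEquiv⟩, WindingCoupling.coupling.inr 0, ?_⟩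
  rw [WindingCoupling.orbit_inr_zero,
    ← WindingCoupling.coupling.isClosedEmbedding_inr.isClosed_iff_image_isClosed]
  exact AddCircle.not_isClosed_range_zsmul irrational_sqrt_two
end
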